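/- arXiv:1801.07169 — 3 statements merged into one kernel-verified Lean document; each statement's English description precedes it below -/
import Mathlib

section
/- Let n ≥ 2 be a natural number, b > 0, κ₁ > 0, κ₂ > 0, and let m satisfy 0 ≤ m ≤ (b+1)/2. Let D > 0 and a₂ > 0. Then there exists a constant C > 0, depending only on n, b, κ₁, κ₂, m, D, a₂, with the following property. Let k be a natural number, let θ : [k, k+1] → (0,∞) be continuously differentiable, let v : [k, k+1] → (0,∞) and r : [k, k+1] → [1,∞) be measurable, suppose ∫ₖ^{k+1} (v(ξ) + θ(ξ)) dξ ≤ D, suppose there is a point y ∈ [k, k+1] with θ(y) ≤ a₂, and set V = ∫ₖ^{k+1} (κ₁ + κ₂ v(ξ) θ(ξ)ᵇ) r(ξ)^{2(n−1)} θ'(ξ)² / (v(ξ) θ(ξ)²) dξ. Then for every x ∈ [k, k+1]: (i) |θ(x)ᵐ − θ(y)ᵐ| ≤ C √V; and (ii) θ(x)^{2m} ≤ C (1 + V). -/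
set_option maxHeartbeats 1000000
open MeasureTheory

lemma amgm_aux {c P Q : ℝ} (hc : 0 ≤ c) (hP : 0 ≤ P) (hQ : 0 ≤ Q) (h : c^2 ≤ P*Q) :
    2*c ≤ P + Q := by nlinarith [sq_nonneg (P - Q), sq_nonneg (P + Q)]

lemma sqrt_add_le' {x y : ℝ} (hx : 0 ≤ x) (hy : 0 ≤ y) :
    Real.sqrt (x + y) ≤ Real.sqrt x + Real.sqrt y := by
  calc Real.sqrt (x+y) ≤ Real.sqrt ((Real.sqrt x + Real.sqrt y)^2) := by
        apply Real.sqrt_le_sqrt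
        nlinarith [Real.sq_sqrt hx, Real.sq_sqrt hy, Real.sqrt_nonneg x, Real.sqrt_nonneg y,
          mul_nonneg (Real.sqrt_nonneg x) (Real.sqrt_nonneg y)]
    _ = _ := Real.sqrt_sq (by positivity)

lemma ptwise {κ₁ κ₂ K m b ε a w R d : ℝ} (hκ₁ : 0 < κ₁) (hκ₂ : 0 < κ₂)
    (hK1 : K ≤ κ₁) (hK2 : K ≤ κ₂) (hKpos : 0 < K)
    (hm0 : 0 ≤ m) (hm1 : m ≤ (b+1)/2) (hε : 0 < ε)
    (ha : 0 < a) (hw : 0 < w) (hR : 1 ≤ R) :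
    |d * m * a ^ (m-1)| ≤
      (m*ε/2) * ((κ₁ + κ₂*w*a^b)*R*d^2/(w*a^2)) + (m/(2*K*ε)) * (w + a) := by
  set A := a ^ m with hA
  set N := κ₁ + κ₂*w*a^b with hN
  have hab : 0 < a ^ b := Real.rpow_pos_of_pos ha b
  have hApos : 0 < A := Real.rpow_pos_of_pos ha m
  have hNpos : 0 < N := by positivity
  have hRpos : 0 < R := lt_of_lt_of_le one_pos hR
  have hA2 : K*w*A^2 ≤ N*(w+a) := by
    have hA2eq : A^2 = a^(2*m) := by rw [sq, ← Real.rpow_add ha, two_mul]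
    rcases le_total a 1 with h1 | h1
    · have hA1 : A ≤ 1 := Real.rpow_le_one ha.le h1 hm0
      have hA1sq : A^2 ≤ 1 := by nlinarith
      have h1' : K*w*A^2 ≤ κ₁*w := by
        nlinarith [mul_nonneg (sub_nonneg.mpr (mul_le_mul_of_nonneg_right hK1 hw.le)) (sq_nonneg A),
          mul_nonneg (mul_nonneg hκ₁.le hw.le) (sub_nonneg.mpr hA1sq)]
      nlinarith [h1', mul_pos hκ₁ ha,
        mul_nonneg (mul_nonneg (mul_nonneg hκ₂.le hw.le) hab.le) (by positivity : (0:ℝ) ≤ w+a)]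
    · have h2m : A^2 ≤ a^b * a := by
        rw [hA2eq]
        calc a^(2*m) ≤ a^(b+1) := Real.rpow_le_rpow_of_exponent_le h1 (by linarith)
          _ = a^b * a := by rw [Real.rpow_add ha, Real.rpow_one]
      nlinarith [mul_pos hw ha, mul_le_mul_of_nonneg_left h2m (mul_nonneg hκ₂.le hw.le),
        mul_pos hκ₁ (mul_pos hw ha), mul_pos hκ₂ (mul_pos hw hab), sq_nonneg A,
        mul_le_mul_of_nonneg_right hK2 (mul_nonneg hw.le (sq_nonneg A))]
  have ham1 : a ^ (m-1) = A / a := by rw [hA, Real.rpow_sub ha, Real.rpow_one]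
  set c : ℝ := |d| * (A / a) with hc
  have hcnn : 0 ≤ c := by positivity
  set P : ℝ := ε * (N*R*d^2/(w*a^2)) with hP
  set Q : ℝ := (w + a) / (ε*K) with hQ
  have hPnn : 0 ≤ P := by positivity
  have hQnn : 0 ≤ Q := by positivity
  have hcPQ : c^2 ≤ P*Q := by
    have e1 : c^2 = d^2*A^2/a^2 := by rw [hc, mul_pow, sq_abs, div_pow]; ring
    have e2 : P*Q = N*R*d^2*(w+a)/(w*a^2*K) := by
      rw [hP, hQ]; field_simp
    rw [e1, e2, div_le_div_iff₀ (by positivity) (by positivity)]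
    have step1 : K*w*A^2*(d^2*a^2) ≤ N*(w+a)*(d^2*a^2) :=
      mul_le_mul_of_nonneg_right hA2 (by positivity)
    have step2 : N*(w+a)*(d^2*a^2) ≤ N*R*(w+a)*(d^2*a^2) := by
      have : N*(w+a)*(d^2*a^2) = 1 * (N*(w+a)*(d^2*a^2)) := by ring
      nlinarith [mul_le_mul_of_nonneg_right hR (mul_nonneg (mul_nonneg hNpos.le
        (by positivity : (0:ℝ) ≤ w + a)) (by positivity : (0:ℝ) ≤ d^2*a^2))]
    nlinarith [step1, step2]
  have h2c : 2*c ≤ P + Q := amgm_aux hcnn hPnn hQnn hcPQ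
  have habs : |d * m * a ^ (m-1)| = m * c := by
    rw [ham1, abs_mul, abs_mul, abs_of_nonneg hm0, abs_of_pos (by positivity : (0:ℝ) < A / a), hc]
    ring
  rw [habs]
  have hrhs : (m*ε/2) * (N*R*d^2/(w*a^2)) + (m/(2*K*ε)) * (w + a) = (m/2)*(P+Q) := by
    rw [hP, hQ]; field_simp
  rw [hrhs]
  nlinarith [mul_le_mul_of_nonneg_left h2c hm0]

set_option maxHeartbeats 1000000 in
/-- Lemma 3.2: a rough pointwise bound on powers of the temperature on the unit interval
`[k, k+1]` in terms of the entropy dissipation rate functional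
`V = ∫ₖ^{k+1} (κ₁ + κ₂ v θᵇ) r^{2(n−1)} θ_x² / (v θ²) dx`. -/
theorem stmt_10 (n : ℕ) (hn : 2 ≤ n) (b κ₁ κ₂ m : ℝ)
    (hb : 0 < b) (hκ₁ : 0 < κ₁) (hκ₂ : 0 < κ₂)
    (hm0 : 0 ≤ m) (hm1 : m ≤ (b + 1) / 2)
    (D a₂ : ℝ) (hD : 0 < D) (ha₂ : 0 < a₂) :
    ∃ C : ℝ, 0 < C ∧
      ∀ (k : ℕ) (θ θ' v r : ℝ → ℝ) (y : ℝ) (V : ℝ),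
        (∀ x ∈ Set.Icc (k : ℝ) (k + 1), 0 < θ x) →
        (∀ x ∈ Set.Icc (k : ℝ) (k + 1), HasDerivAt θ (θ' x) x) →
        ContinuousOn θ' (Set.Icc (k : ℝ) (k + 1)) →
        Measurable v → Measurable r →
        (∀ x ∈ Set.Icc (k : ℝ) (k + 1), 0 < v x) →
        (∀ x ∈ Set.Icc (k : ℝ) (k + 1), 1 ≤ r x) →
        IntegrableOn (fun x => v x + θ x) (Set.Icc (k : ℝ) (k + 1)) →
        (∫ x in Set.Icc (k : ℝ) (k + 1), (v x + θ x)) ≤ D →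
        y ∈ Set.Icc (k : ℝ) (k + 1) → θ y ≤ a₂ →
        IntegrableOn
          (fun x => (κ₁ + κ₂ * v x * θ x ^ b) * r x ^ (2 * (n - 1)) * θ' x ^ 2 /
            (v x * θ x ^ 2)) (Set.Icc (k : ℝ) (k + 1)) →
        V = (∫ x in Set.Icc (k : ℝ) (k + 1),
          (κ₁ + κ₂ * v x * θ x ^ b) * r x ^ (2 * (n - 1)) * θ' x ^ 2 /
            (v x * θ x ^ 2)) →
        ∀ x ∈ Set.Icc (k : ℝ) (k + 1),
          |θ x ^ m - θ y ^ m| ≤ C * Real.sqrt V ∧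
          θ x ^ (2 * m) ≤ C * (1 + V) := by
  set K := min κ₁ κ₂ with hKdef
  have hKpos : 0 < K := lt_min hκ₁ hκ₂
  have hK1 : K ≤ κ₁ := min_le_left _ _
  have hK2 : K ≤ κ₂ := min_le_right _ _
  have hDK : 0 < D / K := div_pos hD hKpos
  set E := Real.sqrt (D / K) with hEdef
  have hEpos : 0 < E := Real.sqrt_pos.mpr hDK
  have hE2 : E^2 = D / K := Real.sq_sqrt hDK.le
  set C₁ := m * E with hC₁def
  have hC₁nn : 0 ≤ C₁ := mul_nonneg hm0 hEpos.le
  have hmax1 : (0:ℝ) < max 1 a₂ := lt_of_lt_of_le one_pos (le_max_left 1 a₂)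
  set M := (max 1 a₂) ^ ((b+1)/2) with hMdef
  have hMpos : 0 < M := Real.rpow_pos_of_pos hmax1 _
  refine ⟨2*C₁^2 + 2*M^2 + C₁ + 1, by positivity, ?_⟩
  intro k θ θ' v r y V hθpos hθder hθ'c hv hr hvpos hrge hint1 hintD hy hya hint2 hVdef x hx
  have hVnn : 0 ≤ V := by
    rw [hVdef]
    apply setIntegral_nonneg measurableSet_Icc
    intro t ht
    have h1 := hθpos t ht; have h2 := hvpos t ht
    have h3 : (0:ℝ) ≤ r t := le_trans zero_le_one (hrge t ht)
    positivity
  have hθc : ContinuousOn θ (Set.Icc (k:ℝ) (k+1)) :=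
    fun t ht => ((hθder t ht).continuousAt).continuousWithinAt
  have hfc : ContinuousOn (fun t => θ' t * m * θ t ^ (m-1)) (Set.Icc (k:ℝ) (k+1)) := by
    apply (hθ'c.mul continuousOn_const).mul
    exact hθc.rpow_const (fun t ht => Or.inl (hθpos t ht).ne')
  have hfint : IntegrableOn (fun t => |θ' t * m * θ t ^ (m-1)|) (Set.Icc (k:ℝ) (k+1)) :=
    (hfc.integrableOn_compact isCompact_Icc).abs
  have main : ∀ ε : ℝ, 0 < ε → ∀ p ∈ Set.Icc (k:ℝ) (k+1), ∀ q ∈ Set.Icc (k:ℝ) (k+1), p ≤ q →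
      |θ q ^ m - θ p ^ m| ≤ m/2 * (ε*V + (D/K)/ε) := by
    intro ε hε p hp q hq hpq
    have hsub : Set.Icc p q ⊆ Set.Icc (k:ℝ) (k+1) := Set.Icc_subset_Icc hp.1 hq.2
    have husub : Set.uIcc p q ⊆ Set.Icc (k:ℝ) (k+1) := by
      rw [Set.uIcc_of_le hpq]; exact hsub
    have hftc : ∫ t in p..q, θ' t * m * θ t ^ (m-1) = θ q ^ m - θ p ^ m :=
      intervalIntegral.integral_eq_sub_of_hasDerivAt
        (fun t ht => (hθder t (husub ht)).rpow_const (Or.inl (hθpos t (husub ht)).ne'))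
        ((hfc.mono husub).intervalIntegrable)
    have hGint : IntegrableOn (fun t => (m*ε/2) * ((κ₁ + κ₂ * v t * θ t ^ b) *
        r t ^ (2 * (n - 1)) * θ' t ^ 2 / (v t * θ t ^ 2)) + (m/(2*K*ε)) * (v t + θ t))
        (Set.Icc (k:ℝ) (k+1)) := (hint2.const_mul _).add (hint1.const_mul _)
    have hpt : ∀ t ∈ Set.Icc (k:ℝ) (k+1), |θ' t * m * θ t ^ (m-1)| ≤
        (m*ε/2) * ((κ₁ + κ₂ * v t * θ t ^ b) * r t ^ (2 * (n - 1)) * θ' t ^ 2 /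
          (v t * θ t ^ 2)) + (m/(2*K*ε)) * (v t + θ t) := by
      intro t ht
      have hR : 1 ≤ r t ^ (2 * (n - 1)) := by
        simpa using pow_le_pow_left₀ zero_le_one (hrge t ht) (2*(n-1))
      exact ptwise hκ₁ hκ₂ hK1 hK2 hKpos hm0 hm1 hε (hθpos t ht) (hvpos t ht) hR
    calc |θ q ^ m - θ p ^ m| = |∫ t in p..q, θ' t * m * θ t ^ (m-1)| := by rw [hftc]
      _ ≤ ∫ t in p..q, |θ' t * m * θ t ^ (m-1)| :=
          intervalIntegral.abs_integral_le_integral_abs hpq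
      _ = ∫ t in Set.Ioc p q, |θ' t * m * θ t ^ (m-1)| := intervalIntegral.integral_of_le hpq
      _ ≤ ∫ t in Set.Icc (k:ℝ) (k+1), |θ' t * m * θ t ^ (m-1)| := by
          apply setIntegral_mono_set hfint
          · exact Filter.Eventually.of_forall fun t => abs_nonneg _
          · exact HasSubset.Subset.eventuallyLE (Set.Ioc_subset_Icc_self.trans hsub)
      _ ≤ ∫ t in Set.Icc (k:ℝ) (k+1), ((m*ε/2) * ((κ₁ + κ₂ * v t * θ t ^ b) *
            r t ^ (2 * (n - 1)) * θ' t ^ 2 / (v t * θ t ^ 2)) + (m/(2*K*ε)) * (v t + θ t)) :=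
          setIntegral_mono_on hfint hGint measurableSet_Icc hpt
      _ = (m*ε/2) * (∫ t in Set.Icc (k:ℝ) (k+1), ((κ₁ + κ₂ * v t * θ t ^ b) *
            r t ^ (2 * (n - 1)) * θ' t ^ 2 / (v t * θ t ^ 2))) +
          (m/(2*K*ε)) * ∫ t in Set.Icc (k:ℝ) (k+1), (v t + θ t) := by
          rw [integral_add (hint2.const_mul _) (hint1.const_mul _), integral_const_mul,
            integral_const_mul]
      _ ≤ (m*ε/2) * V + (m/(2*K*ε)) * D := by
          rw [← hVdef]
          gcongr
      _ = m/2 * (ε*V + (D/K)/ε) := by field_simp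
  have main2 : ∀ ε : ℝ, 0 < ε → |θ x ^ m - θ y ^ m| ≤ m/2*(ε*V + (D/K)/ε) := by
    intro ε hε
    rcases le_total y x with h | h
    · exact main ε hε y hy x hx h
    · rw [abs_sub_comm]; exact main ε hε x hx y hy h
  have part1 : |θ x ^ m - θ y ^ m| ≤ C₁ * Real.sqrt V := by
    have hstep : ∀ s : ℝ, 0 < s → |θ x ^ m - θ y ^ m| ≤ m * E * Real.sqrt (V + s) := by
      intro s hs
      have hVs : 0 < V + s := by linarith
      set S := Real.sqrt (V + s) with hSdef
      have hSpos : 0 < S := Real.sqrt_pos.mpr hVs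
      have hS2 : S^2 = V + s := Real.sq_sqrt hVs.le
      have hε : 0 < E / S := by positivity
      refine le_trans (main2 _ hε) ?_
      have e1 : (D/K)/(E/S) = E * S := by
        rw [← hE2]; field_simp
      rw [e1]
      have h2 : (E/S)*V ≤ E*S := by
        rw [div_mul_eq_mul_div, div_le_iff₀ hSpos]
        nlinarith [hEpos.le]
      nlinarith [mul_le_mul_of_nonneg_left h2 (by positivity : (0:ℝ) ≤ m/2),
        mul_nonneg hm0 (mul_nonneg hEpos.le hSpos.le)]
    refine _root_.le_of_forall_pos_le_add ?_
    intro δ hδ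
    have hmE1 : 0 < m*E + 1 := by positivity
    have hs : (0:ℝ) < (δ/(m*E+1))^2 := by positivity
    refine le_trans (hstep _ hs) ?_
    have h3 : Real.sqrt (V + (δ/(m*E+1))^2) ≤ Real.sqrt V + δ/(m*E+1) := by
      refine le_trans (sqrt_add_le' hVnn (by positivity)) ?_
      rw [Real.sqrt_sq (by positivity)]
    have hmE : 0 ≤ m*E := mul_nonneg hm0 hEpos.le
    calc m*E*Real.sqrt (V + (δ/(m*E+1))^2) ≤ m*E*(Real.sqrt V + δ/(m*E+1)) :=
          mul_le_mul_of_nonneg_left h3 hmE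
      _ ≤ C₁ * Real.sqrt V + δ := by
          rw [hC₁def]
          have h4 : m*E*(δ/(m*E+1)) ≤ δ := by
            rw [mul_div_assoc', div_le_iff₀ hmE1]
            nlinarith
          nlinarith
  have hxm_nn : 0 ≤ θ x ^ m := (Real.rpow_pos_of_pos (hθpos x hx) m).le
  have hym : θ y ^ m ≤ M := by
    calc θ y ^ m ≤ (max 1 a₂) ^ m :=
          Real.rpow_le_rpow (hθpos y hy).le (le_trans hya (le_max_right 1 a₂)) hm0
      _ ≤ M := Real.rpow_le_rpow_of_exponent_le (le_max_left 1 a₂) hm1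
  have hym_nn : 0 ≤ θ y ^ m := (Real.rpow_pos_of_pos (hθpos y hy) m).le
  have hsqV : Real.sqrt V ^ 2 = V := Real.sq_sqrt hVnn
  have hsV_nn := Real.sqrt_nonneg V
  constructor
  · refine le_trans part1 ?_
    have hC : C₁ ≤ 2*C₁^2+2*M^2+C₁+1 := by nlinarith [sq_nonneg C₁, sq_nonneg M]
    exact mul_le_mul_of_nonneg_right hC hsV_nn
  · have h2m : θ x ^ (2*m) = (θ x ^ m)^2 := by
      rw [two_mul, Real.rpow_add (hθpos x hx), sq]
    rw [h2m]
    have habs2 : θ x ^ m ≤ C₁ * Real.sqrt V + M := by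
      nlinarith [le_abs_self (θ x ^ m - θ y ^ m), part1]
    have key1 : (θ x ^ m)^2 ≤ (C₁ * Real.sqrt V + M)^2 := pow_le_pow_left₀ hxm_nn habs2 2
    have key2 : (C₁ * Real.sqrt V + M)^2 ≤ 2*C₁^2*V + 2*M^2 := by
      nlinarith [sq_nonneg (C₁*Real.sqrt V - M), hsqV]
    have key3 : 2*C₁^2*V + 2*M^2 ≤ (2*C₁^2+2*M^2+C₁+1)*(1+V) := by
      nlinarith [hVnn, hC₁nn, sq_nonneg C₁, mul_nonneg (sq_nonneg M) hVnn,
        mul_nonneg hC₁nn hVnn]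
    linarith [key1, key2, key3]
end

section
/- Define φ(y) = y − ln y − 1 for y > 0. Let C > 0 and let a₁ ∈ (0,1) and a₂ ∈ (1,∞) be the two positive roots of φ(y) = C. Let I be an interval of length 1 and let v : I → (0,∞) be measurable with v and ln v integrable on I and ∫_I (v(x) − ln v(x) − 1) dx ≤ C. Then a₁ − C − 1 ≤ ∫_I ln v(x) dx ≤ ln a₂; in particular |∫_I ln v(x) dx| is bounded by a constant depending only on C. -/
open MeasureTheory Real

/-!
With `φ = entropyWeight` and `L = ∫_I ln v`, Jensen's inequality `exp L ≤ ∫_I v` turns the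
entropy bound into `φ(exp L) ≤ C`. As `φ` is convex with minimum at `1`, its sublevel set
`{φ ≤ C}` is `[a₁, a₂]`; taking logarithms gives `ln a₁ ≤ L ≤ ln a₂`, and `ln a₁ = a₁ - C - 1`.
-/

noncomputable def entropyWeight (y : ℝ) : ℝ := y - log y - 1

/-- The tangent line of the convex `φ` at `a`, with slope `φ'(a) = 1 - a⁻¹`. -/
theorem entropyWeight_add_mul_sub_le {a y : ℝ} (ha : 0 < a) (hy : 0 < y) :
    entropyWeight a + (1 - a⁻¹) * (y - a) ≤ entropyWeight y := by
  have hlog : log (y / a) ≤ y / a - 1 := log_le_sub_one_of_pos (div_pos hy ha)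
  rw [log_div hy.ne' ha.ne'] at hlog
  have hslope : (1 - a⁻¹) * (y - a) = y - a - (y / a - 1) := by field_simp
  unfold entropyWeight
  linarith

theorem le_of_entropyWeight_le_of_lt_one {a y : ℝ} (ha₀ : 0 < a) (ha₁ : a < 1) (hy : 0 < y)
    (h : entropyWeight y ≤ entropyWeight a) : a ≤ y := by
  have hslope : 1 - a⁻¹ < 0 := sub_neg.mpr ((one_lt_inv₀ ha₀).mpr ha₁)
  have := entropyWeight_add_mul_sub_le ha₀ hy
  nlinarith

theorem le_of_entropyWeight_le_of_one_lt {a y : ℝ} (ha : 1 < a) (hy : 0 < y)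
    (h : entropyWeight y ≤ entropyWeight a) : y ≤ a := by
  have hslope : 0 < 1 - a⁻¹ := sub_pos.mpr (inv_lt_one_of_one_lt₀ ha)
  have := entropyWeight_add_mul_sub_le (one_pos.trans ha) hy
  nlinarith

theorem exp_integral_log_le_integral {α : Type*} [MeasurableSpace α] {μ : Measure α}
    [IsProbabilityMeasure μ] {v : α → ℝ} (hv : ∀ᵐ x ∂μ, 0 < v x) (hvint : Integrable v μ)
    (hlog : Integrable (fun x => log (v x)) μ) :
    exp (∫ x, log (v x) ∂μ) ≤ ∫ x, v x ∂μ := by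
  have hexp : (fun x => exp (log (v x))) =ᵐ[μ] v := hv.mono fun x hx => exp_log hx
  calc exp (∫ x, log (v x) ∂μ)
      ≤ ∫ x, exp (log (v x)) ∂μ :=
        convexOn_exp.map_integral_le continuousOn_exp isClosed_univ (by simp) hlog
          (hvint.congr hexp.symm)
    _ = ∫ x, v x ∂μ := integral_congr_ae hexp

theorem stmt_13_general (C a₁ a₂ : ℝ)
    (ha₁ : a₁ ∈ Set.Ioo (0 : ℝ) 1) (ha₂ : a₂ ∈ Set.Ioi (1 : ℝ))
    (hroot₁ : a₁ - Real.log a₁ - 1 = C) (hroot₂ : a₂ - Real.log a₂ - 1 = C)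
    (t : ℝ) (v : ℝ → ℝ)
    (hvpos : ∀ x ∈ Set.Icc t (t + 1), 0 < v x)
    (hvint : IntegrableOn v (Set.Icc t (t + 1)))
    (hlogint : IntegrableOn (fun x => Real.log (v x)) (Set.Icc t (t + 1)))
    (hent : (∫ x in Set.Icc t (t + 1), (v x - Real.log (v x) - 1)) ≤ C) :
    a₁ - C - 1 ≤ (∫ x in Set.Icc t (t + 1), Real.log (v x)) ∧
      (∫ x in Set.Icc t (t + 1), Real.log (v x)) ≤ Real.log a₂ := by
  have : IsProbabilityMeasure (volume.restrict (Set.Icc t (t + 1))) :=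
    ⟨by simp [Real.volume_Icc]⟩
  set L := ∫ x in Set.Icc t (t + 1), log (v x)
  have hφ : entropyWeight (exp L) ≤ C :=
    calc entropyWeight (exp L) = exp L - L - 1 := by rw [entropyWeight, log_exp]
      _ ≤ (∫ x in Set.Icc t (t + 1), v x) - L - 1 := by
        gcongr
        exact exp_integral_log_le_integral
          (ae_restrict_of_forall_mem measurableSet_Icc hvpos) hvint hlogint
      _ = ∫ x in Set.Icc t (t + 1), (v x - log (v x) - 1) := by
        have hdiff : IntegrableOn (fun x => v x - log (v x)) (Set.Icc t (t + 1)) :=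
          hvint.sub hlogint
        rw [integral_sub hdiff (integrable_const 1), integral_sub hvint hlogint]
        simp [L]
      _ ≤ C := hent
  have h₁ := le_of_entropyWeight_le_of_lt_one ha₁.1 ha₁.2 (exp_pos L) (hφ.trans hroot₁.ge)
  have h₂ := le_of_entropyWeight_le_of_one_lt ha₂ (exp_pos L) (hφ.trans hroot₂.ge)
  have hL₁ : log a₁ ≤ L := (log_le_iff_le_exp ha₁.1).mpr h₁
  exact ⟨by linarith, (le_log_iff_exp_le (one_pos.trans ha₂)).mpr h₂⟩

/-- Estimate (3.35): two-sided bound on `∫_I ln v` over a unit interval `I`, given the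
entropy bound `∫_I (v − ln v − 1) ≤ C`, where `a₁ ∈ (0,1)` and `a₂ ∈ (1,∞)` are the two
roots of `y − ln y − 1 = C`. -/
theorem stmt_13 (C a₁ a₂ : ℝ) (hC : 0 < C)
    (ha₁ : a₁ ∈ Set.Ioo (0 : ℝ) 1) (ha₂ : a₂ ∈ Set.Ioi (1 : ℝ))
    (hroot₁ : a₁ - Real.log a₁ - 1 = C) (hroot₂ : a₂ - Real.log a₂ - 1 = C)
    (t : ℝ) (v : ℝ → ℝ) (hmeas : Measurable v)
    (hvpos : ∀ x ∈ Set.Icc t (t + 1), 0 < v x)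
    (hvint : IntegrableOn v (Set.Icc t (t + 1)))
    (hlogint : IntegrableOn (fun x => Real.log (v x)) (Set.Icc t (t + 1)))
    (hent : (∫ x in Set.Icc t (t + 1), (v x - Real.log (v x) - 1)) ≤ C) :
    a₁ - C - 1 ≤ (∫ x in Set.Icc t (t + 1), Real.log (v x)) ∧
      (∫ x in Set.Icc t (t + 1), Real.log (v x)) ≤ Real.log a₂ :=
  stmt_13_general C a₁ a₂ ha₁ ha₂ hroot₁ hroot₂ t v hvpos hvint hlogint hent
end

section
/- Let n ≥ 2 be a natural number, b ≥ 0, D > 0 and a₂ ≥ 1. Then there exists a constant C > 0, depending only on n, b, D, a₂, with the following property. Let θ : [0,∞) → (0,∞) be bounded and continuously differentiable, and let r : [0,∞) → [1,∞) be measurable. Suppose ∫₀^∞ (θ(x) − 1)⁴ dx ≤ D, and suppose that for every natural number k there exists y ∈ [k, k+1] with θ(y) ≤ a₂. Then sup_{x ≥ 0} θ(x) ≤ C + C (∫₀^∞ r(x)^{2(n−1)} (1 + θ(x)^{2b}) θ'(x)² dx)^{1/(2b+6)}. -/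
open MeasureTheory Set
open scoped ENNReal NNReal

lemma aux_real_rpow_add_le {a b p : ℝ} (ha : 0 ≤ a) (hb : 0 ≤ b) (hp : 0 ≤ p) (hp1 : p ≤ 1) :
    (a + b) ^ p ≤ a ^ p + b ^ p := by
  have h := NNReal.rpow_add_le_add_rpow a.toNNReal b.toNNReal hp hp1
  rw [← Real.toNNReal_add ha hb] at h
  calc (a + b) ^ p = ((a + b).toNNReal ^ p : ℝ≥0) := by
        rw [NNReal.coe_rpow, Real.coe_toNNReal _ (by positivity)]
    _ ≤ ((a.toNNReal ^ p + b.toNNReal ^ p : ℝ≥0) : ℝ) := NNReal.coe_le_coe.2 h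
    _ = a ^ p + b ^ p := by
        push_cast [NNReal.coe_rpow, Real.coe_toNNReal _ ha, Real.coe_toNNReal _ hb]
        ring

lemma aux_young {A B s : ℝ} (hs : 0 < s) : A * B ≤ s⁻¹ / 2 * A ^ 2 + s / 2 * B ^ 2 := by
  have h1 : 0 ≤ s⁻¹ / 2 * (A - s * B) ^ 2 :=
    mul_nonneg (by positivity) (sq_nonneg _)
  have hss : s * s⁻¹ = 1 := mul_inv_cancel₀ hs.ne'
  nlinarith [h1, hss, sq_nonneg (A - s * B)]

lemma aux_integral_le (f g : ℝ → ℝ) (hf : ContinuousOn f (Ici 0))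
    (hf0 : ∀ t ∈ Ici (0:ℝ), 0 ≤ f t) (hfg : ∀ t ∈ Ici (0:ℝ), f t ≤ g t)
    (a c : ℝ) (ha : 0 ≤ a) (hac : a ≤ c) (L : ℝ≥0∞)
    (hL : (∫⁻ t in Ici (0:ℝ), ENNReal.ofReal (g t)) ≤ L) (hLt : L ≠ ⊤) :
    ∫ t in a..c, f t ≤ L.toReal := by
  have hsub : Ioc a c ⊆ Ici (0:ℝ) := fun t ht => le_trans ha (le_of_lt ht.1)
  rw [intervalIntegral.integral_of_le hac]
  have hmeas : AEStronglyMeasurable f (volume.restrict (Ioc a c)) :=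
    (hf.mono hsub).aestronglyMeasurable measurableSet_Ioc
  have h0 : (0 : ℝ → ℝ) ≤ᵐ[volume.restrict (Ioc a c)] f :=
    (ae_restrict_iff' measurableSet_Ioc).2 (Filter.Eventually.of_forall fun t ht => hf0 t (hsub ht))
  rw [integral_eq_lintegral_of_nonneg_ae h0 hmeas]
  have h1 : (∫⁻ t in Ioc a c, ENNReal.ofReal (f t)) ≤ L := by
    calc (∫⁻ t in Ioc a c, ENNReal.ofReal (f t))
        ≤ ∫⁻ t in Ici (0:ℝ), ENNReal.ofReal (f t) := lintegral_mono_set hsub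
      _ ≤ ∫⁻ t in Ici (0:ℝ), ENNReal.ofReal (g t) :=
          lintegral_mono_ae ((ae_restrict_iff' measurableSet_Ici).2
            (Filter.Eventually.of_forall fun t ht => ENNReal.ofReal_le_ofReal (hfg t ht)))
      _ ≤ L := hL
  exact ENNReal.toReal_mono hLt h1

set_option maxHeartbeats 2000000 in
/-- Estimates (4.2)–(4.3): the key bound `‖θ‖_∞ ≤ C + C Y^{1/(2b+6)}`, where
`Y = ∫₀^∞ r^{2(n−1)} (1 + θ^{2b}) θ_x² dx` is the weighted temperature-gradient
functional, given `∫₀^∞ (θ−1)⁴ ≤ D` and points with `θ ≤ a₂` on every unit interval. -/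
theorem stmt_15 (n : ℕ) (hn : 2 ≤ n) (b D a₂ : ℝ) (hb : 0 ≤ b) (hD : 0 < D)
    (ha₂ : 1 ≤ a₂) :
    ∃ C : ℝ, 0 < C ∧
      ∀ (θ θ' r : ℝ → ℝ),
        (∀ x : ℝ, 0 ≤ x → 0 < θ x) →
        (∃ M : ℝ, ∀ x : ℝ, 0 ≤ x → θ x ≤ M) →
        (∀ x : ℝ, 0 ≤ x → HasDerivAt θ (θ' x) x) →
        ContinuousOn θ' (Set.Ici 0) →
        (∀ x : ℝ, 0 ≤ x → 1 ≤ r x) → Measurable r →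
        (∫⁻ x in Set.Ici (0 : ℝ), ENNReal.ofReal ((θ x - 1) ^ 4)) ≤ ENNReal.ofReal D →
        (∀ k : ℕ, ∃ y ∈ Set.Icc (k : ℝ) (k + 1), θ y ≤ a₂) →
        ∀ x : ℝ, 0 ≤ x →
          ENNReal.ofReal (θ x) ≤ ENNReal.ofReal C + ENNReal.ofReal C *
            (∫⁻ x in Set.Ici (0 : ℝ),
              ENNReal.ofReal (r x ^ (2 * (n - 1)) * (1 + θ x ^ (2 * b)) * θ' x ^ 2)) ^
              (1 / (2 * b + 6)) := by
  -- Constants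
  have hb3 : (0:ℝ) < b + 3 := by linarith
  set K : ℝ := 8 * D + 8 with hKdef
  have hK : 0 < K := by rw [hKdef]; linarith
  set M : ℝ := (b + 3) * (1 + K) with hMdef
  have hM : 0 < M := by rw [hMdef]; exact mul_pos hb3 (by linarith)
  set A : ℝ := a₂ ^ (b + 3) + M with hAdef
  have ha₂pos : (0:ℝ) < a₂ := lt_of_lt_of_le one_pos ha₂
  have hA : 0 < A := add_pos (Real.rpow_pos_of_pos ha₂pos _) hM
  set q : ℝ := 1 / (b + 3) with hqdef
  have hq : 0 < q := by rw [hqdef]; exact one_div_pos.2 hb3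
  have hq1 : q ≤ 1 := by
    rw [hqdef, div_le_one hb3]; linarith
  refine ⟨A ^ q + M ^ q,
    add_pos (Real.rpow_pos_of_pos hA _) (Real.rpow_pos_of_pos hM _), ?_⟩
  set C : ℝ := A ^ q + M ^ q with hCdef
  have hCA : A ^ q ≤ C := le_add_of_nonneg_right (Real.rpow_nonneg hM.le _)
  have hCM : M ^ q ≤ C := le_add_of_nonneg_left (Real.rpow_nonneg hA.le _)
  have hCpos : 0 < C := add_pos (Real.rpow_pos_of_pos hA _) (Real.rpow_pos_of_pos hM _)
  intro θ θ' r hθpos _hθbd hderiv hθ'c hr _hrm hD4 hmean x hx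
  set L : ℝ≥0∞ := ∫⁻ x in Set.Ici (0 : ℝ),
      ENNReal.ofReal (r x ^ (2 * (n - 1)) * (1 + θ x ^ (2 * b)) * θ' x ^ 2) with hLdef
  by_cases hLtop : L = ⊤
  · rw [hLtop, ENNReal.top_rpow_of_pos (div_pos one_pos (by linarith)), ENNReal.mul_top
      (by simpa [ENNReal.ofReal_eq_zero, not_le] using hCpos)]
    simp
  -- Finite case
  set Y : ℝ := L.toReal with hYdef
  have hY : 0 ≤ Y := ENNReal.toReal_nonneg
  set s : ℝ := Real.sqrt (Y + 1) with hsdef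
  have hs1 : 1 ≤ s := by
    have h := Real.sqrt_le_sqrt (show (1:ℝ) ≤ Y + 1 by linarith)
    rw [Real.sqrt_one] at h
    exact h
  have hs0 : 0 < s := lt_of_lt_of_le one_pos hs1
  have hs2 : s ^ 2 = Y + 1 := Real.sq_sqrt (by linarith)
  -- locate a good point y near x
  obtain ⟨y, hy, hya⟩ := hmean ⌊x⌋₊
  have hk1 : (⌊x⌋₊ : ℝ) ≤ x := Nat.floor_le hx
  have hk2 : x ≤ (⌊x⌋₊ : ℝ) + 1 := (Nat.lt_floor_add_one x).le
  have hk0 : (0:ℝ) ≤ (⌊x⌋₊ : ℝ) := Nat.cast_nonneg _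
  set a : ℝ := min x y with hadef
  set c : ℝ := max x y with hcdef
  have hya0 : 0 ≤ y := le_trans hk0 hy.1
  have ha0 : 0 ≤ a := le_min hx hya0
  have hac : a ≤ c := min_le_max
  have hca1 : c - a ≤ 1 := by
    rcases le_total x y with h | h
    · rw [hadef, hcdef, min_eq_left h, max_eq_right h]
      have := hy.2; linarith
    · rw [hadef, hcdef, min_eq_right h, max_eq_left h]
      have := hy.1; linarith
  have hsubIcc : Icc a c ⊆ Ici (0:ℝ) := fun t ht => le_trans ha0 ht.1
  have huIcc : uIcc y x = Icc a c := by
    rw [Set.uIcc_comm, Set.uIcc, hadef, hcdef]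
  have hsubu : uIcc y x ⊆ Ici (0:ℝ) := by rw [huIcc]; exact hsubIcc
  -- continuity facts
  have hθc : ContinuousOn θ (Ici 0) := fun t ht =>
    (hderiv t ht).continuousAt.continuousWithinAt
  have hθpow : ∀ p : ℝ, ContinuousOn (fun t => θ t ^ p) (Ici 0) := fun p =>
    hθc.rpow_const fun t ht => Or.inl (hθpos t ht).ne'
  -- FTC
  set F' : ℝ → ℝ := fun t => θ' t * (b + 3) * θ t ^ (b + 3 - 1) with hF'def
  have hF'cont : ContinuousOn F' (Ici 0) :=
    ((hθ'c.mul continuousOn_const).mul (hθpow (b + 3 - 1)))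
  have hF'int : IntervalIntegrable F' volume y x :=
    (hF'cont.mono hsubu).intervalIntegrable
  have hftc : ∫ t in y..x, F' t = θ x ^ (b + 3) - θ y ^ (b + 3) := by
    refine intervalIntegral.integral_eq_sub_of_hasDerivAt
      (f := fun z => θ z ^ (b + 3)) (f' := F') (fun t ht => ?_) hF'int
    exact (hderiv t (hsubu ht)).rpow_const (p := b + 3) (Or.inl (hθpos t (hsubu ht)).ne')
  -- integrands
  set f₁ : ℝ → ℝ := fun t => θ t ^ (2 * b) * θ' t ^ 2 with hf₁def
  set f₂ : ℝ → ℝ := fun t => θ t ^ (4 : ℕ) with hf₂def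
  have hf₁cont : ContinuousOn f₁ (Ici 0) := (hθpow (2 * b)).mul (hθ'c.pow 2)
  have hf₂cont : ContinuousOn f₂ (Ici 0) := hθc.pow 4
  have hf₁int : IntervalIntegrable f₁ volume a c :=
    (hf₁cont.mono (by rw [Set.uIcc_of_le hac]; exact hsubIcc)).intervalIntegrable
  have hf₂int : IntervalIntegrable f₂ volume a c :=
    (hf₂cont.mono (by rw [Set.uIcc_of_le hac]; exact hsubIcc)).intervalIntegrable
  -- pointwise bound
  have hptwise : ∀ t ∈ Icc a c,
      |F' t| ≤ (b + 3) * (s⁻¹ / 2 * f₁ t + s / 2 * f₂ t) := by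
    intro t ht
    have ht0 : (0:ℝ) ≤ t := hsubIcc ht
    have hθt : 0 < θ t := hθpos t ht0
    have e1 : θ t ^ (b + 3 - 1) = θ t ^ b * θ t ^ 2 := by
      rw [show b + 3 - 1 = b + 2 by ring, Real.rpow_add hθt,
        Real.rpow_two]
    have habs : |F' t| = |θ' t| * (b + 3) * (θ t ^ b * θ t ^ 2) := by
      rw [hF'def, ← e1, abs_mul, abs_mul, abs_of_nonneg (by linarith : (0:ℝ) ≤ b + 3),
        abs_of_nonneg (Real.rpow_nonneg hθt.le _)]
    rw [habs]
    have hyoung : (θ t ^ b * |θ' t|) * (θ t ^ 2)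
        ≤ s⁻¹ / 2 * (θ t ^ b * |θ' t|) ^ 2 + s / 2 * (θ t ^ 2) ^ 2 := aux_young hs0
    have e0 : (θ t ^ b) ^ 2 = θ t ^ (2 * b) := by
      rw [← Real.rpow_natCast (θ t ^ b) 2, ← Real.rpow_mul hθt.le]
      congr 1
      push_cast
      ring
    have e2 : (θ t ^ b * |θ' t|) ^ 2 = f₁ t := by
      have hft : f₁ t = θ t ^ (2 * b) * θ' t ^ 2 := rfl
      rw [hft, mul_pow, sq_abs, e0]
    have e3 : ((θ t ^ 2) ^ 2 : ℝ) = f₂ t := by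
      have hft : f₂ t = θ t ^ (4:ℕ) := rfl
      rw [hft]; ring
    calc |θ' t| * (b + 3) * (θ t ^ b * θ t ^ 2)
        = (b + 3) * ((θ t ^ b * |θ' t|) * θ t ^ 2) := by ring
      _ ≤ (b + 3) * (s⁻¹ / 2 * f₁ t + s / 2 * f₂ t) := by
          rw [← e2, ← e3]
          exact mul_le_mul_of_nonneg_left hyoung (by linarith)
  -- the integral inequality
  have hintabs : IntervalIntegrable (fun t => |F' t|) volume a c :=
    ((hF'cont.mono (by rw [Set.uIcc_of_le hac]; exact hsubIcc)).abs).intervalIntegrable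
  have hintrhs : IntervalIntegrable
      (fun t => (b + 3) * (s⁻¹ / 2 * f₁ t + s / 2 * f₂ t)) volume a c :=
    (((hf₁int.const_mul _).add (hf₂int.const_mul _)).const_mul _)
  have hmono := intervalIntegral.integral_mono_on hac hintabs hintrhs hptwise
  have hsplit : ∫ t in a..c, (b + 3) * (s⁻¹ / 2 * f₁ t + s / 2 * f₂ t)
      = (b + 3) * (s⁻¹ / 2 * (∫ t in a..c, f₁ t) + s / 2 * (∫ t in a..c, f₂ t)) := by
    rw [intervalIntegral.integral_const_mul,
      intervalIntegral.integral_add (hf₁int.const_mul _) (hf₂int.const_mul _),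
      intervalIntegral.integral_const_mul, intervalIntegral.integral_const_mul]
  -- I₁ ≤ Y
  have hI₁ : ∫ t in a..c, f₁ t ≤ Y := by
    refine aux_integral_le f₁ (fun t => r t ^ (2 * (n - 1)) * (1 + θ t ^ (2 * b)) * θ' t ^ 2)
      hf₁cont (fun t ht => ?_) (fun t ht => ?_) a c ha0 hac L (le_of_eq hLdef.symm) hLtop
    · exact mul_nonneg (Real.rpow_nonneg (hθpos t ht).le _) (sq_nonneg _)
    · have h1 : θ t ^ (2 * b) ≤ 1 + θ t ^ (2 * b) := by linarith
      have h2 : (1:ℝ) ≤ r t ^ (2 * (n - 1)) := one_le_pow₀ (hr t ht)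
      have h3 : (0:ℝ) ≤ θ t ^ (2 * b) := Real.rpow_nonneg (hθpos t ht).le _
      calc f₁ t = θ t ^ (2 * b) * θ' t ^ 2 := rfl
        _ ≤ (r t ^ (2 * (n - 1)) * (1 + θ t ^ (2 * b))) * θ' t ^ 2 := by
            refine mul_le_mul_of_nonneg_right ?_ (sq_nonneg _)
            calc θ t ^ (2 * b) = 1 * θ t ^ (2 * b) := (one_mul _).symm
              _ ≤ r t ^ (2 * (n - 1)) * (1 + θ t ^ (2 * b)) :=
                mul_le_mul h2 h1 h3 (by linarith)
        _ = r t ^ (2 * (n - 1)) * (1 + θ t ^ (2 * b)) * θ' t ^ 2 := rfl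
  -- I₂ ≤ K
  have hI₂ : ∫ t in a..c, f₂ t ≤ K := by
    have hptw2 : ∀ t ∈ Icc a c, f₂ t ≤ 8 * (θ t - 1) ^ (4:ℕ) + 8 := by
      intro t ht
      have hθt : 0 < θ t := hθpos t (hsubIcc ht)
      have hft : f₂ t = θ t ^ (4:ℕ) := rfl
      rw [hft]
      have hpos2 : (0:ℝ) ≤ 7 * (θ t - 1) ^ 2 + 10 * (θ t - 1) + 7 := by
        nlinarith [sq_nonneg (θ t - 1 + 5 / 7)]
      have hprod := mul_nonneg (sq_nonneg (θ t - 2)) hpos2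
      linarith [hprod]
    have hg1cont : ContinuousOn (fun t => ((θ t - 1) ^ (4:ℕ) : ℝ)) (Ici 0) :=
      ((hθc.sub continuousOn_const).pow 4)
    have hg1int : IntervalIntegrable (fun t => ((θ t - 1) ^ (4:ℕ) : ℝ)) volume a c :=
      (hg1cont.mono (by rw [Set.uIcc_of_le hac]; exact hsubIcc)).intervalIntegrable
    have hint2 : IntervalIntegrable (fun t => 8 * (θ t - 1) ^ (4:ℕ) + 8) volume a c :=
      (hg1int.const_mul 8).add (intervalIntegrable_const)
    have h1 := intervalIntegral.integral_mono_on hac hf₂int hint2 hptw2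
    have h2 : ∫ t in a..c, (8 * (θ t - 1) ^ (4:ℕ) + 8)
        = 8 * (∫ t in a..c, (θ t - 1) ^ (4:ℕ)) + 8 * (c - a) := by
      rw [intervalIntegral.integral_add (hg1int.const_mul 8) intervalIntegrable_const,
        intervalIntegral.integral_const_mul, intervalIntegral.integral_const]
      simp [smul_eq_mul, mul_comm]
    have h3 : ∫ t in a..c, ((θ t - 1) ^ (4:ℕ) : ℝ) ≤ D := by
      have := aux_integral_le (fun t => ((θ t - 1) ^ (4:ℕ) : ℝ))
        (fun t => ((θ t - 1) ^ (4:ℕ) : ℝ)) hg1cont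
        (fun t _ => by positivity) (fun t _ => le_rfl) a c ha0 hac
        (ENNReal.ofReal D) hD4 ENNReal.ofReal_ne_top
      rwa [ENNReal.toReal_ofReal hD.le] at this
    rw [hKdef]
    calc ∫ t in a..c, f₂ t ≤ 8 * (∫ t in a..c, (θ t - 1) ^ (4:ℕ)) + 8 * (c - a) := by
          rw [← h2]; exact h1
      _ ≤ 8 * D + 8 := by
          have h4 : 8 * (c - a) ≤ 8 * 1 := by linarith
          have h5 : 8 * (∫ t in a..c, ((θ t - 1) ^ (4:ℕ) : ℝ)) ≤ 8 * D := by linarith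
          linarith
  -- combine: θ x ^ (b+3) ≤ A + M * √Y
  have hI₁0 : (0:ℝ) ≤ ∫ t in a..c, f₁ t := by
    refine intervalIntegral.integral_nonneg hac fun t ht => ?_
    exact mul_nonneg (Real.rpow_nonneg (hθpos t (hsubIcc ht)).le _) (sq_nonneg _)
  have habsint : |∫ t in y..x, F' t| ≤ ∫ t in a..c, |F' t| := by
    rcases le_total y x with h | h
    · rw [hadef, hcdef, min_eq_right h, max_eq_left h]
      exact intervalIntegral.abs_integral_le_integral_abs h
    · rw [intervalIntegral.integral_symm x y, abs_neg, hadef, hcdef,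
        min_eq_left h, max_eq_right h]
      exact intervalIntegral.abs_integral_le_integral_abs h
  have hkey : θ x ^ (b + 3) ≤ A + M * Real.sqrt Y := by
    have hθy : θ y ^ (b + 3) ≤ a₂ ^ (b + 3) :=
      Real.rpow_le_rpow (hθpos y hya0).le hya (by linarith)
    have hYs : Y ≤ s ^ 2 := by rw [hs2]; linarith
    have hterm1 : s⁻¹ / 2 * (∫ t in a..c, f₁ t) ≤ s / 2 := by
      have h1 : s⁻¹ / 2 * (∫ t in a..c, f₁ t) ≤ s⁻¹ / 2 * Y :=
        mul_le_mul_of_nonneg_left hI₁ (le_of_lt (div_pos (inv_pos.2 hs0) two_pos))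
      have h2 : s⁻¹ / 2 * Y ≤ s / 2 := by
        have h3 := mul_le_mul_of_nonneg_left hYs (inv_pos.2 hs0).le
        have h4 : s⁻¹ * s ^ 2 = s := by
          rw [sq, ← mul_assoc, inv_mul_cancel₀ hs0.ne', one_mul]
        rw [h4] at h3
        linarith
      linarith
    have hterm2 : s / 2 * (∫ t in a..c, f₂ t) ≤ s / 2 * K :=
      mul_le_mul_of_nonneg_left hI₂ (le_of_lt (div_pos hs0 two_pos))
    have hsqY : s ≤ 1 + Real.sqrt Y := by
      have h1 : Y + 1 ≤ (1 + Real.sqrt Y) ^ 2 := by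
        nlinarith [Real.sq_sqrt hY, Real.sqrt_nonneg Y]
      calc s = Real.sqrt (Y + 1) := hsdef
        _ ≤ Real.sqrt ((1 + Real.sqrt Y) ^ 2) := Real.sqrt_le_sqrt h1
        _ = 1 + Real.sqrt Y := Real.sqrt_sq (by positivity)
    calc θ x ^ (b + 3) = θ y ^ (b + 3) + ∫ t in y..x, F' t := by rw [hftc]; ring
      _ ≤ a₂ ^ (b + 3) + |∫ t in y..x, F' t| := by
          have := le_abs_self (∫ t in y..x, F' t); linarith
      _ ≤ a₂ ^ (b + 3) + ∫ t in a..c, |F' t| := by linarith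
      _ ≤ a₂ ^ (b + 3) + (b + 3) * (s⁻¹ / 2 * (∫ t in a..c, f₁ t)
            + s / 2 * (∫ t in a..c, f₂ t)) := by rw [← hsplit]; linarith
      _ ≤ a₂ ^ (b + 3) + (b + 3) * (s / 2 + s / 2 * K) := by
          have h6 : s⁻¹ / 2 * (∫ t in a..c, f₁ t) + s / 2 * (∫ t in a..c, f₂ t)
              ≤ s / 2 + s / 2 * K := by linarith
          have h7 := mul_le_mul_of_nonneg_left h6 (le_of_lt hb3)
          linarith
      _ ≤ a₂ ^ (b + 3) + M * s := by
          have e9 : (b + 3) * (s / 2 + s / 2 * K) = (b + 3) * (1 + K) * (s / 2) := by ring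
          have h8 : (0:ℝ) ≤ (b + 3) * (1 + K) := mul_nonneg hb3.le (by linarith)
          have h9 := mul_le_mul_of_nonneg_left (show s / 2 ≤ s by linarith) h8
          rw [hMdef]
          linarith [e9, h9]
      _ ≤ a₂ ^ (b + 3) + M * (1 + Real.sqrt Y) := by
          have := mul_le_mul_of_nonneg_left hsqY hM.le
          linarith
      _ = A + M * Real.sqrt Y := by rw [hAdef]; ring
  -- extract θ x
  have hmain : θ x ≤ C + C * Y ^ (1 / (2 * b + 6)) := by
    have hθx : 0 < θ x := hθpos x hx
    have h1 : θ x = (θ x ^ (b + 3)) ^ q := by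
      rw [← Real.rpow_mul hθx.le,
        show (b + 3) * q = 1 by rw [hqdef]; field_simp, Real.rpow_one]
    have h2 : (θ x ^ (b + 3)) ^ q ≤ (A + M * Real.sqrt Y) ^ q :=
      Real.rpow_le_rpow (Real.rpow_nonneg hθx.le _) hkey hq.le
    have h3 : (A + M * Real.sqrt Y) ^ q ≤ A ^ q + (M * Real.sqrt Y) ^ q :=
      aux_real_rpow_add_le hA.le (mul_nonneg hM.le (Real.sqrt_nonneg _)) hq.le hq1
    have h4 : (M * Real.sqrt Y) ^ q = M ^ q * Y ^ (1 / (2 * b + 6)) := by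
      rw [Real.mul_rpow hM.le (Real.sqrt_nonneg _), Real.sqrt_eq_rpow,
        ← Real.rpow_mul hY]
      congr 1
      have hb3' : (b + 3) ≠ 0 := ne_of_gt hb3
      have h26 : (2 * b + 6) ≠ 0 := by intro h; apply hb3'; linarith
      rw [hqdef]
      field_simp
      ring
    have h5 : M ^ q * Y ^ (1 / (2 * b + 6)) ≤ C * Y ^ (1 / (2 * b + 6)) :=
      mul_le_mul_of_nonneg_right hCM (Real.rpow_nonneg hY _)
    calc θ x = (θ x ^ (b + 3)) ^ q := h1
      _ ≤ (A + M * Real.sqrt Y) ^ q := h2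
      _ ≤ A ^ q + (M * Real.sqrt Y) ^ q := h3
      _ = A ^ q + M ^ q * Y ^ (1 / (2 * b + 6)) := by rw [h4]
      _ ≤ C + C * Y ^ (1 / (2 * b + 6)) := add_le_add hCA h5
  -- convert to ENNReal
  calc ENNReal.ofReal (θ x) ≤ ENNReal.ofReal (C + C * Y ^ (1 / (2 * b + 6))) :=
        ENNReal.ofReal_le_ofReal hmain
    _ = ENNReal.ofReal C + ENNReal.ofReal (C * Y ^ (1 / (2 * b + 6))) :=
        ENNReal.ofReal_add hCpos.le (mul_nonneg hCpos.le (Real.rpow_nonneg hY _))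
    _ = ENNReal.ofReal C + ENNReal.ofReal C * ENNReal.ofReal (Y ^ (1 / (2 * b + 6))) := by
        rw [ENNReal.ofReal_mul hCpos.le]
    _ = ENNReal.ofReal C + ENNReal.ofReal C * (ENNReal.ofReal Y) ^ (1 / (2 * b + 6)) := by
        rw [ENNReal.ofReal_rpow_of_nonneg hY (by positivity)]
    _ = ENNReal.ofReal C + ENNReal.ofReal C * L ^ (1 / (2 * b + 6)) := by
        rw [hYdef, ENNReal.ofReal_toReal hLtop]
end
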